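/- arXiv:math/0404476 — 3 statements merged into one kernel-verified Lean document; each statement's English description precedes it below -/
import Mathlib

section
/- Let x₁, …, x_l ∈ ℤ^n be vectors such that ℤx₁ + ⋯ + ℤx_l = ℤ^n and a₁x₁ + ⋯ + a_l x_l = 0 for positive integers a₁, …, a_l with gcd(a₁, …, a_l) = 1. Then l ≥ n + 1, and if l = n + 1, any n of the vectors x₁, …, x_{n+1} are linearly independent over ℚ. -/
/-!
Over ℚ the `xᵢ` span `ℚⁿ`, and since every coefficient of the relation is nonzero, any single
`xᵢ₀` lies in the span of the others. So the remaining `l - 1` vectors still span `ℚⁿ`, giving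
`n ≤ l - 1`; when `l = n + 1` they are `n` spanning vectors of `ℚⁿ`, hence a basis.
-/

open Submodule

theorem span_range_intCast_eq_top {R ι κ : Type*} [Ring R] [Finite κ] {x : ι → κ → ℤ}
    (hx : span ℤ (Set.range x) = ⊤) :
    span R (Set.range fun i j => (x i j : R)) = ⊤ := by
  classical
  let cast : (κ → ℤ) →ₗ[ℤ] (κ → R) := (Int.castAddHom R).toIntLinearMap.compLeft κ
  have hspan_int : span ℤ (Set.range fun i j => (x i j : R)) = LinearMap.range cast := by
    rw [LinearMap.range_eq_map, ← hx, map_span, ← Set.range_comp]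
    rfl
  rw [eq_top_iff, ← (Pi.basisFun R κ).span_eq, span_le]
  rintro _ ⟨j, rfl⟩
  have hsingle : Pi.basisFun R κ j ∈ span ℤ (Set.range fun i j => (x i j : R)) := by
    rw [hspan_int]
    exact ⟨Pi.single j 1, by ext k; simp [cast, Pi.single_apply]⟩
  exact span_le_restrictScalars ℤ R _ hsingle

theorem span_range_subtype_ne_eq_of_sum_smul_eq_zero {K M ι : Type*} [DivisionRing K]
    [AddCommGroup M] [Module K M] [Fintype ι] [DecidableEq ι] {v : ι → M} {c : ι → K}
    (hrel : ∑ i, c i • v i = 0) {i₀ : ι} (hi₀ : c i₀ ≠ 0) :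
    span K (Set.range fun i : {i // i ≠ i₀} => v i) = span K (Set.range v) := by
  refine le_antisymm (span_mono (Set.range_comp_subset_range _ _)) (span_le.2 ?_)
  rintro _ ⟨i, rfl⟩
  by_cases hi : i = i₀
  · subst hi
    rw [Fintype.sum_eq_add_sum_subtype_ne _ i, add_eq_zero_iff_eq_neg] at hrel
    rw [SetLike.mem_coe, ← smul_mem_iff _ hi₀, hrel]
    exact neg_mem (sum_mem fun j _ => smul_mem _ _ (subset_span ⟨j, rfl⟩))
  · exact subset_span ⟨⟨i, hi⟩, rfl⟩

/-- if `x₁, …, x_l ∈ ℤ^n` generate `ℤ^n` as a group and satisfy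
`a₁x₁ + ⋯ + a_l x_l = 0` with `aᵢ ∈ ℤ_{>0}` and `gcd(a₁,…,a_l) = 1`, then `l ≥ n + 1`,
and when `l = n + 1` every `n`-element subset of the `xᵢ` (i.e. the complement of any
single index) is linearly independent over `ℚ`. -/
theorem stmt5 {n l : ℕ} (x : Fin l → (Fin n → ℤ))
    (hspan : Submodule.span ℤ (Set.range x) = (⊤ : Submodule ℤ (Fin n → ℤ)))
    (a : Fin l → ℤ) (ha : ∀ i, 0 < a i)
    (hgcd : Finset.univ.gcd a = 1)
    (hrel : ∑ i, a i • x i = 0) :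
    n + 1 ≤ l ∧
    (l = n + 1 → ∀ i₀ : Fin l,
      LinearIndependent ℚ (fun i : {i : Fin l // i ≠ i₀} =>
        (fun j => (x i.val j : ℚ) : Fin n → ℚ))) := by
  set y : Fin l → Fin n → ℚ := fun i j => (x i j : ℚ)
  have hrelQ : ∑ i, (a i : ℚ) • y i = 0 := by
    ext k
    simpa [y] using congrArg (fun v : Fin n → ℤ => (v k : ℚ)) hrel
  have hspan_compl (i₀ : Fin l) : span ℚ (Set.range fun i : {i // i ≠ i₀} => y i) = ⊤ := by
    rw [span_range_subtype_ne_eq_of_sum_smul_eq_zero hrelQ (by exact_mod_cast (ha i₀).ne'),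
      span_range_intCast_eq_top hspan]
  have hcard (i₀ : Fin l) : Fintype.card {i // i ≠ i₀} = l - 1 := by
    simp [Fintype.card_subtype_compl]
  obtain ⟨i₀⟩ : Nonempty (Fin l) := by
    by_contra h
    simp [not_nonempty_iff.1 h] at hgcd
  refine ⟨?_, fun hl i₀ => linearIndependent_of_top_le_span_of_card_eq_finrank
    (hspan_compl i₀).ge (by simp [hcard, hl])⟩
  have := finrank_le_of_span_eq_top (hspan_compl i₀)
  simp only [Module.finrank_fin_fun, hcard] at this
  have := i₀.pos
  omega
end

section
/- Let x₁, …, x_{n+1} ∈ ℤ^n satisfy a₁x₁ + ⋯ + a_{n+1}x_{n+1} = 0 with all aᵢ positive integers, and suppose any n of the xᵢ are linearly independent over ℚ. Then the n+1 cones σᵢ = Σ_{j ≠ i} ℝ_{≥0} x_j (for i = 1, …, n+1) cover ℝ^n, i.e., every point of ℝ^n lies in some σᵢ. -/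
/-!
Any `n` of the `xᵢ` stay independent over `ℝ`, so the `xᵢ` span `ℝⁿ`; write `p = ∑ cᵢ xᵢ`.
Subtracting `s` times the positive relation, with `s = min cᵢ / aᵢ`, keeps every coefficient
nonnegative and makes the minimizing one vanish.
-/

open Finset Submodule

section PositiveRelation

variable {K M ι : Type*} [Field K] [LinearOrder K] [IsStrictOrderedRing K]
  [AddCommGroup M] [Module K M] [Fintype ι] [Nonempty ι]

theorem exists_nonneg_sum_smul_eq_of_pos_relation {v : ι → M} {a : ι → K}
    (ha : ∀ i, 0 < a i) (hrel : ∑ i, a i • v i = 0) {p : M} (hp : p ∈ span K (Set.range v)) :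
    ∃ i₀, ∃ t : ι → K, (∀ j, 0 ≤ t j) ∧ t i₀ = 0 ∧ p = ∑ j, t j • v j := by
  obtain ⟨c, rfl⟩ := mem_span_range_iff_exists_fun K |>.1 hp
  obtain ⟨m, -, hm⟩ := exists_min_image univ (fun i => c i / a i) univ_nonempty
  set s := c m / a m
  refine ⟨m, fun j => c j - s * a j, fun j => ?_, ?_, ?_⟩
  · have := (le_div_iff₀ (ha j)).1 (hm j (mem_univ j))
    linarith
  · simp only [s, div_mul_cancel₀ _ (ha m).ne', sub_self]
  · simp only [sub_smul, mul_smul, sum_sub_distrib, ← smul_sum, hrel, smul_zero, sub_zero]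

end PositiveRelation

/-- if `x₁, …, x_{n+1} ∈ ℤ^n` satisfy `a₁x₁ + ⋯ + a_{n+1}x_{n+1} = 0` with
all `aᵢ` positive integers and every `n` of the `xᵢ` are linearly independent over `ℚ`,
then the `n+1` cones `σᵢ = Σ_{j≠i} ℝ_{≥0} x_j` cover `ℝ^n`. -/
theorem stmt6 {n : ℕ} (x : Fin (n + 1) → (Fin n → ℤ))
    (a : Fin (n + 1) → ℤ) (ha : ∀ i, 0 < a i)
    (hrel : ∑ i, a i • x i = 0)
    (hindep : ∀ i₀ : Fin (n + 1),
      LinearIndependent ℚ (fun i : {i : Fin (n + 1) // i ≠ i₀} =>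
        (fun j => (x i.val j : ℚ) : Fin n → ℚ))) :
    ∀ p : Fin n → ℝ, ∃ i₀ : Fin (n + 1), ∃ t : Fin (n + 1) → ℝ,
      (∀ j, 0 ≤ t j) ∧ t i₀ = 0 ∧ p = ∑ j, t j • (fun k => (x j k : ℝ)) := by
  intro p
  set y : Fin (n + 1) → Fin n → ℝ := fun i k => (x i k : ℝ)
  have hrelR : ∑ i, (a i : ℝ) • y i = 0 := by
    funext k
    have := congrFun hrel k
    simp only [Finset.sum_apply, Pi.smul_apply, smul_eq_mul, Pi.zero_apply, y] at this ⊢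
    exact_mod_cast this
  have hli : LinearIndependent ℝ (fun i : {i // i ≠ Fin.last n} => y i) := by
    have := linearIndependent_algebraMap_comp_iff (S := ℝ) |>.2 (hindep (Fin.last n))
    simpa only [Function.comp_def, eq_ratCast, Rat.cast_intCast] using this
  have hspan : span ℝ (Set.range y) = ⊤ :=
    top_le_iff.1 <| (hli.span_eq_top_of_card_eq_finrank' (by simp)).ge.trans <|
      span_mono (Set.range_comp_subset_range _ y)
  exact exists_nonneg_sum_smul_eq_of_pos_relation (fun i => by exact_mod_cast ha i) hrelR
    (hspan ▸ mem_top)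
end

section
/- Let x₁, …, x_{n+1} ∈ ℤ^n satisfy a₁x₁ + ⋯ + a_{n+1}x_{n+1} = 0 with all aᵢ positive integers, and suppose any n of the xᵢ are linearly independent over ℚ. Then for i ≠ j, the intersection σᵢ ∩ σⱼ equals the cone generated by {x_k : k ≠ i, k ≠ j}, where σᵢ = Σ_{k ≠ i} ℝ_{≥0} x_k. -/
/-- The cone of nonnegative real combinations of the vectors `x j` for `j` in `S`. -/
def coneOn {n m : ℕ} (x : Fin m → (Fin n → ℤ)) (S : Set (Fin m)) : Set (Fin n → ℝ) :=
  {p | ∃ t : Fin m → ℝ, (∀ k, 0 ≤ t k) ∧ (∀ k ∉ S, t k = 0) ∧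
    p = ∑ k, t k • (fun j => (x k j : ℝ))}

/-!
A point of `σᵢ ∩ σⱼ` has coefficient vectors `s` with `s i = 0` and `t` with `t j = 0`, so
`s - t` is a real linear relation among the `xₖ`. As all `xₖ` with `k ≠ i` are independent, the
relations form the line spanned by `a`, hence `s - t = r • a`. Coordinate `i` gives
`r * a i = -t i ≤ 0` and coordinate `j` gives `r * a j = s j ≥ 0`; since `a` is positive, `r = 0`,
so `s = t` vanishes at both `i` and `j`.
-/

open Finset

theorem linearIndependent_intCast_iff {ι ι' K : Type*} [Finite ι'] [Field K] [CharZero K]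
    {v : ι → ι' → ℤ} : LinearIndependent K (fun i j => (v i j : K)) ↔ LinearIndependent ℤ v := by
  simpa [Function.comp_def] using linearIndependent_algebraMap_comp_iff (S := K) (v := v)

section Relation

variable {ι K V : Type*} [Fintype ι] [Field K] [AddCommGroup V] [Module K V]
  {v : ι → V} {a c : ι → K} {i : ι}

theorem eq_zero_of_sum_smul_eq_zero_of_apply_eq_zero
    (hv : LinearIndependent K fun k : {k // k ≠ i} => v k)
    (hci : c i = 0) (hc : ∑ k, c k • v k = 0) : c = 0 := by
  classical
  have hrest : ∑ k : {k // k ≠ i}, c k • v k = 0 := by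
    simpa [Fintype.sum_eq_add_sum_subtype_ne _ i, hci] using hc
  funext k
  by_cases hk : k = i
  · rw [hk, hci, Pi.zero_apply]
  · exact Fintype.linearIndependent_iff.mp hv (fun k => c k) hrest ⟨k, hk⟩

theorem eq_smul_of_sum_smul_eq_zero
    (hv : LinearIndependent K fun k : {k // k ≠ i} => v k)
    (ha : ∑ k, a k • v k = 0) (hai : a i ≠ 0) (hc : ∑ k, c k • v k = 0) :
    c = (c i / a i) • a := by
  refine sub_eq_zero.mp (eq_zero_of_sum_smul_eq_zero_of_apply_eq_zero hv ?_ ?_)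
  · simp [div_mul_cancel₀ _ hai]
  · simp [sub_smul, mul_smul, sum_sub_distrib, ← smul_sum, ha, hc]

theorem eq_of_sum_smul_eq_of_pos_relation [LinearOrder K] [IsStrictOrderedRing K] {j : ι}
    (hv : LinearIndependent K fun k : {k // k ≠ i} => v k)
    (ha : ∀ k, 0 < a k) (hrel : ∑ k, a k • v k = 0)
    {s t : ι → K} (hs : ∀ k, 0 ≤ s k) (ht : ∀ k, 0 ≤ t k) (hsi : s i = 0) (htj : t j = 0)
    (hst : ∑ k, s k • v k = ∑ k, t k • v k) : s = t := by
  set r := (s - t) i / a i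
  have hdiff : s - t = r • a := eq_smul_of_sum_smul_eq_zero hv hrel (ha i).ne' (by
    simp [sub_smul, sum_sub_distrib, hst])
  have hri : -t i = r * a i := by simpa [hsi] using congrFun hdiff i
  have hrj : s j = r * a j := by simpa [htj] using congrFun hdiff j
  have hr : r = 0 := le_antisymm
    (nonpos_of_mul_nonpos_left (hri ▸ neg_nonpos.mpr (ht i)) (ha i))
    (nonneg_of_mul_nonneg_left (hrj ▸ hs j) (ha j))
  rw [hr, zero_smul] at hdiff
  exact sub_eq_zero.mp hdiff

end Relation

theorem coneOn_mono {n m : ℕ} (x : Fin m → Fin n → ℤ) {S T : Set (Fin m)} (h : S ⊆ T) :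
    coneOn x S ⊆ coneOn x T :=
  fun _ ⟨t, ht, htS, hp⟩ => ⟨t, ht, fun k hk => htS k (fun hkS => hk (h hkS)), hp⟩

/-- with `x₁, …, x_{n+1} ∈ ℤ^n` satisfying a positive relation
`a₁x₁ + ⋯ + a_{n+1}x_{n+1} = 0` and any `n` of the `xᵢ` linearly independent over `ℚ`,
for `i ≠ j` the intersection `σᵢ ∩ σⱼ` of the cones `σᵢ = Σ_{k≠i} ℝ_{≥0}x_k` equals the
cone generated by `{x_k : k ≠ i, k ≠ j}`. -/
theorem stmt7 {n : ℕ} (x : Fin (n + 1) → (Fin n → ℤ))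
    (a : Fin (n + 1) → ℤ) (ha : ∀ i, 0 < a i)
    (hrel : ∑ i, a i • x i = 0)
    (hindep : ∀ i₀ : Fin (n + 1),
      LinearIndependent ℚ (fun i : {i : Fin (n + 1) // i ≠ i₀} =>
        (fun j => (x i.val j : ℚ) : Fin n → ℚ))) :
    ∀ i j : Fin (n + 1), i ≠ j →
      coneOn x {k | k ≠ i} ∩ coneOn x {k | k ≠ j} = coneOn x {k | k ≠ i ∧ k ≠ j} := by
  intro i j _
  have hv : LinearIndependent ℝ fun k : {k // k ≠ i} => fun l => (x k l : ℝ) :=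
    linearIndependent_intCast_iff.mpr (linearIndependent_intCast_iff.mp (hindep i))
  have hrelR : ∑ k, (a k : ℝ) • (fun l => (x k l : ℝ)) = 0 := by
    funext l
    simpa using congrArg (fun y : Fin n → ℤ => (y l : ℝ)) hrel
  refine subset_antisymm ?_ (Set.subset_inter (coneOn_mono x fun _ => And.left)
    (coneOn_mono x fun _ => And.right))
  rintro p ⟨⟨s, hs, hsi, rfl⟩, t, ht, htj, hst⟩
  have hs_eq_t : s = t := eq_of_sum_smul_eq_of_pos_relation hv (fun k => by exact_mod_cast ha k)
    hrelR hs ht (hsi i (by simp)) (htj j (by simp)) hst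
  refine ⟨s, hs, fun k hk => ?_, rfl⟩
  rcases not_and_or.mp hk with hki | hkj
  · exact hsi k hki
  · exact hs_eq_t ▸ htj k hkj
end
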